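/- Let H be Hermitian on a finite-dimensional space ℋ, let ℰ be a subspace spanned by eigenvectors of H, and let B : ℂ^M → ℋ be a linear map with range exactly ℰ. Then the set of proper generalized eigenvalues of the pair (B*HB, B*B) equals the set of eigenvalues of H restricted to ℰ. -/

import Mathlib

/-!
Since `ℰ` is spanned by eigenvectors it is `H`-invariant. If `B x ≠ 0` satisfies the
generalized eigenvalue equation, the residual `H (B x) - μ • B x` lies in `ℰ = range B` and is
orthogonal to all of `range B`, hence vanishes. Conversely an eigenvector `v ∈ ℰ` is `B x` for
some `x`, which then satisfies the equation.
-/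

open Submodule

theorem Submodule.span_le_comap_of_forall_eq_smul {R M : Type*} [CommSemiring R]
    [AddCommMonoid M] [Module R M] (f : M →ₗ[R] M) {S : Set M}
    (hS : ∀ v ∈ S, ∃ μ : R, f v = μ • v) : span R S ≤ (span R S).comap f :=
  span_le.mpr fun v hv ↦ by
    obtain ⟨μ, hμ⟩ := hS v hv
    simpa [hμ] using smul_mem _ μ (subset_span hv)

section GeneralizedEigenvalue

variable {𝕜 V E : Type*} [RCLike 𝕜] [AddCommGroup V] [Module 𝕜 V]
  [NormedAddCommGroup E] [InnerProductSpace 𝕜 E]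

theorem LinearMap.eq_zero_of_mem_range_of_inner_eq_zero (B : V →ₗ[𝕜] E) {w : E}
    (hw : w ∈ LinearMap.range B) (horth : ∀ y, inner 𝕜 (B y) w = 0) : w = 0 := by
  obtain ⟨y, rfl⟩ := hw
  exact inner_self_eq_zero.mp (horth y)

theorem LinearMap.eq_smul_of_inner_eq_mul_inner (H : E →ₗ[𝕜] E) (B : V →ₗ[𝕜] E)
    (hinv : LinearMap.range B ≤ (LinearMap.range B).comap H) {x : V} {μ : 𝕜}
    (hx : ∀ y, inner 𝕜 (B y) (H (B x)) = μ * inner 𝕜 (B y) (B x)) :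
    H (B x) = μ • B x := by
  have hBx : B x ∈ LinearMap.range B := LinearMap.mem_range_self B x
  rw [← sub_eq_zero]
  refine B.eq_zero_of_mem_range_of_inner_eq_zero (sub_mem (hinv hBx) (smul_mem _ μ hBx))
    fun y ↦ ?_
  rw [inner_sub_right, inner_smul_right, hx y, sub_self]

theorem LinearMap.setOf_generalizedEigenvalue_eq (H : E →ₗ[𝕜] E) (B : V →ₗ[𝕜] E)
    (ℰ : Submodule 𝕜 E) (hinv : ℰ ≤ ℰ.comap H) (hrange : LinearMap.range B = ℰ) :
    {μ : 𝕜 | ∃ x : V, B x ≠ 0 ∧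
        ∀ y : V, inner 𝕜 (B y) (H (B x)) = μ * inner 𝕜 (B y) (B x)} =
      {μ : 𝕜 | ∃ v ∈ ℰ, v ≠ 0 ∧ H v = μ • v} := by
  subst hrange
  ext μ
  constructor
  · rintro ⟨x, hx0, hx⟩
    exact ⟨B x, LinearMap.mem_range_self B x, hx0, H.eq_smul_of_inner_eq_mul_inner B hinv hx⟩
  · rintro ⟨_, ⟨x, rfl⟩, hx0, hx⟩
    exact ⟨x, hx0, fun y ↦ by rw [hx, inner_smul_right]⟩

end GeneralizedEigenvalue

theorem stmt_17_general {ℋ : Type*} [NormedAddCommGroup ℋ] [InnerProductSpace ℂ ℋ]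
    (M : ℕ)
    (H : ℋ →ₗ[ℂ] ℋ)
    (ℰ : Submodule ℂ ℋ)
    (hspan : ∃ S : Set ℋ, (∀ v ∈ S, ∃ μ : ℂ, H v = μ • v) ∧ ℰ = Submodule.span ℂ S)
    (B : (Fin M → ℂ) →ₗ[ℂ] ℋ) (hrange : LinearMap.range B = ℰ) :
    {μ : ℂ | ∃ x : Fin M → ℂ, B x ≠ 0 ∧
        ∀ y : Fin M → ℂ, inner ℂ (B y) (H (B x)) = μ * (inner ℂ (B y) (B x) : ℂ)} =
      {μ : ℂ | ∃ v ∈ ℰ, v ≠ 0 ∧ H v = μ • v} := by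
  obtain ⟨S, hS, rfl⟩ := hspan
  exact H.setOf_generalizedEigenvalue_eq B _ (span_le_comap_of_forall_eq_smul H hS) hrange

/-- If `ℰ` is a subspace spanned by eigenvectors of a Hermitian `H` and `B : ℂ^M → ℋ`
has range exactly `ℰ`, then the proper generalized eigenvalues of `(B*HB, B*B)` are
exactly the eigenvalues of `H` restricted to `ℰ`. -/
theorem stmt_17 {ℋ : Type*} [NormedAddCommGroup ℋ] [InnerProductSpace ℂ ℋ]
    [FiniteDimensional ℂ ℋ] (M : ℕ)
    (H : ℋ →ₗ[ℂ] ℋ) (hH : ∀ u v : ℋ, inner ℂ (H u) v = (inner ℂ u (H v) : ℂ))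
    (ℰ : Submodule ℂ ℋ)
    (hspan : ∃ S : Set ℋ, (∀ v ∈ S, ∃ μ : ℂ, H v = μ • v) ∧ ℰ = Submodule.span ℂ S)
    (B : (Fin M → ℂ) →ₗ[ℂ] ℋ) (hrange : LinearMap.range B = ℰ) :
    {μ : ℂ | ∃ x : Fin M → ℂ, B x ≠ 0 ∧
        ∀ y : Fin M → ℂ, inner ℂ (B y) (H (B x)) = μ * (inner ℂ (B y) (B x) : ℂ)} =
      {μ : ℂ | ∃ v ∈ ℰ, v ≠ 0 ∧ H v = μ • v} :=
  stmt_17_general M H ℰ hspan B hrange
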